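/- Let V be a finite set, G a simple graph on V, d ∈ ℕ, and Π_d the partition of V into connected components of the graph G_d whose edges are pairs {u,v} with |N_u ∩ N_v| > 2d. For a component C ∈ Π_d, let U^d_C = {v ∈ V : |N_w △ N_u| ≤ 2d for all w in the component of v in Π_d and all u ∈ C}. Then for any partition Π of V with φ(Π) ≤ d and any v ∈ V, we have [v]_{Π_d} ⊆ [v]_Π ⊆ U^d_{[v]_{Π_d}}. -/

import Mathlib

/-!
If two vertices are adjacent in `G_d`, their closed neighbourhoods share more than `2d` vertices;
were they in different blocks of `Π`, each shared vertex would be a disagreement of one of the two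
blocks with its neighbourhood, so `φ(Π) ≤ d` forces them into the same block. Hence every component
of `G_d` lies in a block of `Π`. Conversely, two vertices `w, u` of one block `B` of `Π` satisfy
`N_w △ N_u ⊆ (B △ N_w) ∪ (B △ N_u)`, so `|N_w △ N_u| ≤ 2d`; as the components of `w` and `u` lie
in `B`, every vertex of `B` belongs to `U^d_C`.
-/

open scoped symmDiff

open Finset

variable {V : Type*} [Fintype V] [DecidableEq V]

/-- Closed neighborhood of `v`: `v` together with its adjacent vertices. -/
def nbhd (G : SimpleGraph V) [DecidableRel G.Adj] (v : V) : Finset V :=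
  insert v (G.neighborFinset v)

/-- `P` encodes a partition of `V`, where `P v` is the block containing `v`. -/
def IsPartitionFun (P : V → Finset V) : Prop :=
  (∀ v, v ∈ P v) ∧ ∀ u v : V, u ∈ P v → P u = P v

/-- Maximum disagreement of the partition `P`. -/
def phi (G : SimpleGraph V) [DecidableRel G.Adj] (P : V → Finset V) : ℕ :=
  Finset.univ.sup fun v => ((P v) ∆ (nbhd G v)).card

/-- Auxiliary graph `G_d`: edges are pairs whose closed neighborhoods intersect
in more than `2 * d` vertices. -/
def Gd (G : SimpleGraph V) [DecidableRel G.Adj] (d : ℕ) : SimpleGraph V :=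
  SimpleGraph.fromRel fun u v => 2 * d < (nbhd G u ∩ nbhd G v).card

/-- The block of `v` in the partition of `V` into connected components of `G_d`. -/
def compBlock (G : SimpleGraph V) [DecidableRel G.Adj] (d : ℕ)
    [DecidableRel (Gd G d).Reachable] (v : V) : Finset V :=
  Finset.univ.filter fun u => (Gd G d).Reachable u v

/-- The set `U^d_C` for the component `C` of `v`. -/
def Ud (G : SimpleGraph V) [DecidableRel G.Adj] (d : ℕ)
    [DecidableRel (Gd G d).Reachable] (v : V) : Finset V :=
  Finset.univ.filter fun x =>
    ∀ w ∈ compBlock G d x, ∀ u ∈ compBlock G d v, ((nbhd G w) ∆ (nbhd G u)).card ≤ 2 * d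

namespace Finset

variable {α : Type*} [DecidableEq α]

theorem card_inter_le_card_symmDiff_add_of_disjoint {A B X Y : Finset α} (hAB : Disjoint A B) :
    #(X ∩ Y) ≤ #(A ∆ X) + #(B ∆ Y) := by
  have hsub : X ∩ Y ⊆ A ∆ X ∪ B ∆ Y := by
    intro x hx
    simp only [mem_inter] at hx
    by_cases hxA : x ∈ A
    · exact mem_union_right _ (mem_symmDiff.mpr (Or.inr ⟨hx.2, disjoint_left.mp hAB hxA⟩))
    · exact mem_union_left _ (mem_symmDiff.mpr (Or.inr ⟨hx.1, hxA⟩))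
  exact (card_le_card hsub).trans (card_union_le _ _)

theorem card_symmDiff_le_card_symmDiff_add (A X Y : Finset α) :
    #(X ∆ Y) ≤ #(A ∆ X) + #(A ∆ Y) := by
  calc #(X ∆ Y) ≤ #(X ∆ A ∪ A ∆ Y) := card_le_card (symmDiff_triangle X A Y)
    _ ≤ #(X ∆ A) + #(A ∆ Y) := card_union_le _ _
    _ = #(A ∆ X) + #(A ∆ Y) := by rw [symmDiff_comm X A]

end Finset

theorem IsPartitionFun.eq_or_disjoint {α : Type*} {P : α → Finset α} (hP : IsPartitionFun P)
    (u w : α) : P u = P w ∨ Disjoint (P u) (P w) := by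
  refine or_iff_not_imp_right.mpr fun hnd => ?_
  obtain ⟨x, hxu, hxw⟩ := not_disjoint_iff.mp hnd
  exact (hP.2 x u hxu).symm.trans (hP.2 x w hxw)

section

variable (G : SimpleGraph V) [DecidableRel G.Adj]

theorem card_symmDiff_nbhd_le_phi (P : V → Finset V) (v : V) : #(P v ∆ nbhd G v) ≤ phi G P :=
  le_sup (f := fun v => #(P v ∆ nbhd G v)) (mem_univ v)

namespace IsPartitionFun

variable {G} {P : V → Finset V} {d : ℕ}

theorem eq_of_gd_adj (hP : IsPartitionFun P) (hphi : phi G P ≤ d) {u w : V}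
    (huw : (Gd G d).Adj u w) : P u = P w := by
  have hinter : 2 * d < #(nbhd G u ∩ nbhd G w) := by
    rcases huw.2 with h | h
    · exact h
    · rwa [inter_comm]
  refine (hP.eq_or_disjoint u w).resolve_right fun hdisj => ?_
  have hshared := card_inter_le_card_symmDiff_add_of_disjoint (X := nbhd G u) (Y := nbhd G w) hdisj
  have hu := card_symmDiff_nbhd_le_phi G P u
  have hw := card_symmDiff_nbhd_le_phi G P w
  omega

theorem eq_of_gd_reachable (hP : IsPartitionFun P) (hphi : phi G P ≤ d) {u w : V}
    (huw : (Gd G d).Reachable u w) : P u = P w := by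
  obtain ⟨p⟩ := huw
  induction p with
  | nil => rfl
  | cons hadj _ ih => exact (hP.eq_of_gd_adj hphi hadj).trans ih

variable [DecidableRel (Gd G d).Reachable]

theorem compBlock_subset (hP : IsPartitionFun P) (hphi : phi G P ≤ d) (v : V) :
    compBlock G d v ⊆ P v := by
  intro u hu
  rw [← hP.eq_of_gd_reachable hphi (mem_filter.mp hu).2]
  exact hP.1 u

theorem subset_ud (hP : IsPartitionFun P) (hphi : phi G P ≤ d) (v : V) : P v ⊆ Ud G d v := by
  intro x hx
  refine mem_filter.mpr ⟨mem_univ x, fun w hw u hu => ?_⟩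
  have hPw : P w = P v := hP.2 w v (hP.2 x v hx ▸ hP.compBlock_subset hphi x hw)
  have hPu : P u = P v := hP.2 u v (hP.compBlock_subset hphi v hu)
  calc #(nbhd G w ∆ nbhd G u) ≤ #(P v ∆ nbhd G w) + #(P v ∆ nbhd G u) :=
        card_symmDiff_le_card_symmDiff_add _ _ _
    _ ≤ d + d := add_le_add ((hPw ▸ card_symmDiff_nbhd_le_phi G P w).trans hphi)
        ((hPu ▸ card_symmDiff_nbhd_le_phi G P u).trans hphi)
    _ = 2 * d := (two_mul d).symm

end IsPartitionFun

end

theorem statement10 (G : SimpleGraph V) [DecidableRel G.Adj] (d : ℕ)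
    [DecidableRel (Gd G d).Reachable]
    (P : V → Finset V) (hP : IsPartitionFun P) (hphi : phi G P ≤ d) (v : V) :
    compBlock G d v ⊆ P v ∧ P v ⊆ Ud G d v :=
  ⟨hP.compBlock_subset hphi v, hP.subset_ud hphi v⟩
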